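/- Fix $k \ge 1$ and $\ell \ge 0$, and let $r_1, \ldots, r_\ell$ be elements of the free group on $k$ generators $g_1, \ldots, g_k$. Let $F$ be the free group on generators $\alpha_1, \beta_1, \ldots, \alpha_k, \beta_k$ (the free group on $\mathrm{Fin}\,k \oplus \mathrm{Fin}\,k$), let $w = \prod_{i=1}^{k} [\alpha_i, \beta_i] \in F$ be the surface relator, and let $\varphi$ be the group homomorphism from the free group on $g_1, \ldots, g_k$ to $F$ sending $g_i \mapsto \alpha_i$. Then the presented group with generators $\alpha_1, \beta_1, \ldots, \alpha_k, \beta_k$ and relator set $\{w\} \cup \{\beta_1, \ldots, \beta_k\} \cup \{\varphi(r_1), \ldots, \varphi(r_\ell)\}$ is isomorphic to the presented group $G = \langle g_1, \ldots, g_k \mid r_1, \ldots, r_\ell \rangle$. -/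

import Mathlib

open scoped commutatorElement

/-- Let `r₁, …, r_ℓ` be elements of the free group on `k` generators `g₁, …, g_k`,
and let `φ` send `gᵢ ↦ αᵢ` into the free group on `α₁, β₁, …, α_k, β_k`.
Then the group presented by generators `αᵢ, βᵢ` and relators
`{∏ᵢ [αᵢ, βᵢ]} ∪ {β₁, …, β_k} ∪ {φ(r₁), …, φ(r_ℓ)}` is isomorphic to the
presented group `G = ⟨g₁, …, g_k ∣ r₁, …, r_ℓ⟩`. -/
theorem stmt_8 (k ℓ : ℕ) (hk : 1 ≤ k) (r : Fin ℓ → FreeGroup (Fin k)) :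
    letI α : Fin k → FreeGroup (Fin k ⊕ Fin k) := fun i => FreeGroup.of (Sum.inl i)
    letI β : Fin k → FreeGroup (Fin k ⊕ Fin k) := fun i => FreeGroup.of (Sum.inr i)
    letI w : FreeGroup (Fin k ⊕ Fin k) := (List.ofFn fun i => ⁅α i, β i⁆).prod
    letI φ : FreeGroup (Fin k) →* FreeGroup (Fin k ⊕ Fin k) := FreeGroup.lift α
    Nonempty (PresentedGroup ({w} ∪ Set.range β ∪ Set.range (fun j => φ (r j)))
      ≃* PresentedGroup (Set.range r)) := by
  set α : Fin k → FreeGroup (Fin k ⊕ Fin k) := fun i => FreeGroup.of (Sum.inl i) with hα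
  set β : Fin k → FreeGroup (Fin k ⊕ Fin k) := fun i => FreeGroup.of (Sum.inr i) with hβ
  set w : FreeGroup (Fin k ⊕ Fin k) := (List.ofFn fun i => ⁅α i, β i⁆).prod with hw
  set φ : FreeGroup (Fin k) →* FreeGroup (Fin k ⊕ Fin k) := FreeGroup.lift α with hφ
  set S : Set (FreeGroup (Fin k ⊕ Fin k)) :=
    {w} ∪ Set.range β ∪ Set.range (fun j => φ (r j)) with hS
  -- map from PG S to PG (range r)
  set f : Fin k ⊕ Fin k → PresentedGroup (Set.range r) :=
    Sum.elim (fun i => PresentedGroup.of i) (fun _ => 1) with hf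
  have hliftα : ∀ x : FreeGroup (Fin k),
      FreeGroup.lift f (φ x) = PresentedGroup.mk (Set.range r) x := by
    intro x
    have : (FreeGroup.lift f).comp φ = PresentedGroup.mk (Set.range r) := by
      apply FreeGroup.ext_hom
      intro i
      simp [hf, φ, α, PresentedGroup.of, PresentedGroup.mk]
    exact DFunLike.congr_fun this x
  have h1 : ∀ s ∈ S, FreeGroup.lift f s = 1 := by
    rintro s (⟨rfl | ⟨i, rfl⟩⟩ | ⟨j, rfl⟩)
    · -- w
      simp only [w, map_list_prod, List.map_ofFn]
      have : ∀ i : Fin k, FreeGroup.lift f ⁅α i, β i⁆ = 1 := by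
        intro i
        simp [α, β, hf, commutatorElement_def]
      simp [Function.comp_def, this]
    · simp [β, hf]
    · rw [hliftα]
      exact (QuotientGroup.eq_one_iff _).mpr
        (Subgroup.subset_normalClosure ⟨j, rfl⟩)
  set g : Fin k → PresentedGroup S := fun i => PresentedGroup.of (Sum.inl i) with hg
  have hliftg : ∀ x : FreeGroup (Fin k),
      FreeGroup.lift g x = PresentedGroup.mk S (φ x) := by
    intro x
    have : (FreeGroup.lift g) = (PresentedGroup.mk S).comp φ := by
      apply FreeGroup.ext_hom
      intro i
      simp [hg, φ, α, PresentedGroup.of, PresentedGroup.mk]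
    rw [this]; rfl
  have h2 : ∀ s ∈ Set.range r, FreeGroup.lift g s = 1 := by
    rintro s ⟨j, rfl⟩
    rw [hliftg]
    exact (QuotientGroup.eq_one_iff _).mpr
      (Subgroup.subset_normalClosure (Or.inr ⟨j, rfl⟩))
  refine ⟨MonoidHom.toMulEquiv (PresentedGroup.toGroup h1) (PresentedGroup.toGroup h2) ?_ ?_⟩
  · apply PresentedGroup.ext
    rintro (i | i)
    · simp [hf, hg]
    · simp only [MonoidHom.comp_apply, MonoidHom.id_apply, PresentedGroup.toGroup.of]
      simp only [hf, Sum.elim_inr, map_one]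
      symm
      exact (QuotientGroup.eq_one_iff _).mpr
        (Subgroup.subset_normalClosure (Or.inl (Or.inr ⟨i, rfl⟩)))
  · apply PresentedGroup.ext
    intro i
    simp [hf, hg]
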